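/- Every u-convex function f : X → ℝ is subdifferentiable everywhere: for each x ∈ X there exists z ∈ Z with f(x) + f^♯(z) = u(x,z). -/

import Mathlib

/-!
Fix `x ∈ X`. Because `f` is a supremum of functions `u(·, z) + a` with `z ∈ Z`, for every `ε > 0`
some such minorant comes within `ε` of `f` at `x`, and its `z` is an `ε`-subgradient:
`u(x', z) - f(x') ≤ u(x, z) - f(x) + ε` for all `x' ∈ X`. By continuity of `u` the `ε`-subgradients
form a closed subset of the compact set `Z`, decreasing in `ε`, so their intersection over
`ε = 1/(k+1)` contains some `z`, which is an exact subgradient. For it the supremum defining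
`f^♯(z)` is attained at `x`, i.e. `f(x) + f^♯(z) = u(x, z)`.
-/

noncomputable def sharpX {n m : ℕ} (u : EuclideanSpace ℝ (Fin n) → EuclideanSpace ℝ (Fin m) → ℝ)
    (X : Set (EuclideanSpace ℝ (Fin n))) (f : EuclideanSpace ℝ (Fin n) → EReal)
    (z : EuclideanSpace ℝ (Fin m)) : EReal :=
  ⨆ x ∈ X, ((u x z : EReal) - f x)

def UConvexX {n m : ℕ} (u : EuclideanSpace ℝ (Fin n) → EuclideanSpace ℝ (Fin m) → ℝ)
    (X : Set (EuclideanSpace ℝ (Fin n))) (Z : Set (EuclideanSpace ℝ (Fin m)))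
    (f : EuclideanSpace ℝ (Fin n) → EReal) : Prop :=
  ∃ A : Set (EuclideanSpace ℝ (Fin m) × ℝ), A.Nonempty ∧ (∀ q ∈ A, q.1 ∈ Z) ∧
    ∀ x ∈ X, f x = ⨆ q ∈ A, ((u x q.1 + q.2 : ℝ) : EReal)

open Set

section ApproxSubgradient

variable {α β : Type*}

/-- For `ε = 0` this is the `u`-subdifferential `∂_u f(x)`. -/
def approxUSubdifferential (u : α → β → ℝ) (X : Set α) (Z : Set β) (f : α → ℝ) (x : α)
    (ε : ℝ) : Set β :=
  {z ∈ Z | ∀ x' ∈ X, u x' z - f x' ≤ u x z - f x + ε}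

variable {u : α → β → ℝ} {X : Set α} {Z : Set β} {f : α → ℝ} {x : α}

theorem approxUSubdifferential_mono {ε δ : ℝ} (h : ε ≤ δ) :
    approxUSubdifferential u X Z f x ε ⊆ approxUSubdifferential u X Z f x δ :=
  fun _ ⟨hz, hle⟩ => ⟨hz, fun x' hx' => (hle x' hx').trans (by linarith)⟩

theorem iInter_approxUSubdifferential_subset :
    ⋂ k : ℕ, approxUSubdifferential u X Z f x (1 / (k + 1)) ⊆
      approxUSubdifferential u X Z f x 0 := by
  intro z hz
  have hmem := mem_iInter.mp hz
  refine ⟨(hmem 0).1, fun x' hx' => le_of_forall_pos_lt_add fun ε hε => ?_⟩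
  obtain ⟨k, hk⟩ := exists_nat_one_div_lt hε
  calc u x' z - f x' ≤ u x z - f x + 1 / (k + 1) := (hmem k).2 x' hx'
    _ < u x z - f x + 0 + ε := by linarith

variable [TopologicalSpace α] [TopologicalSpace β]

theorem isClosed_approxUSubdifferential (hZ : IsClosed Z)
    (hu : ContinuousOn (fun q => u q.1 q.2) (X ×ˢ Z)) (hx : x ∈ X) (ε : ℝ) :
    IsClosed (approxUSubdifferential u X Z f x ε) := by
  have hslice : ∀ x' ∈ X, ContinuousOn (u x') Z := fun x' hx' =>
    hu.comp (Continuous.prodMk_right x').continuousOn fun _ hz => ⟨hx', hz⟩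
  have hclosed : ∀ x' ∈ X,
      IsClosed (Z ∩ (fun z => u x' z - u x z) ⁻¹' Iic (f x' - f x + ε)) := fun x' hx' =>
    ((hslice x' hx').sub (hslice x hx)).preimage_isClosed_of_isClosed hZ isClosed_Iic
  have hS : approxUSubdifferential u X Z f x ε =
      Z ∩ ⋂ x' ∈ X, Z ∩ (fun z => u x' z - u x z) ⁻¹' Iic (f x' - f x + ε) := by
    ext z
    simp only [approxUSubdifferential, mem_inter_iff, mem_iInter, mem_preimage, mem_Iic]
    constructor
    · exact fun ⟨hz, hle⟩ => ⟨hz, fun x' hx' => ⟨hz, by linarith [hle x' hx']⟩⟩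
    · exact fun ⟨hz, hle⟩ => ⟨hz, fun x' hx' => by linarith [(hle x' hx').2]⟩
  rw [hS]
  exact hZ.inter (isClosed_biInter hclosed)

theorem nonempty_approxUSubdifferential_zero [T2Space β] (hZ : IsCompact Z)
    (hu : ContinuousOn (fun q => u q.1 q.2) (X ×ˢ Z)) (hx : x ∈ X)
    (hne : ∀ ε > 0, (approxUSubdifferential u X Z f x ε).Nonempty) :
    (approxUSubdifferential u X Z f x 0).Nonempty := by
  set S : ℕ → Set β := fun k => approxUSubdifferential u X Z f x (1 / (k + 1))
  have hanti : ∀ k, S (k + 1) ⊆ S k := fun k => approxUSubdifferential_mono <| by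
    gcongr
    linarith
  have hclosed : ∀ k, IsClosed (S k) := fun k =>
    isClosed_approxUSubdifferential hZ.isClosed hu hx _
  have hcompact : IsCompact (S 0) := hZ.of_isClosed_subset (hclosed 0) fun _ hz => hz.1
  exact (IsCompact.nonempty_iInter_of_sequence_nonempty_isCompact_isClosed S hanti
    (fun k => hne _ (by positivity)) hcompact hclosed).mono iInter_approxUSubdifferential_subset

end ApproxSubgradient

section Euclidean

variable {n m : ℕ} {u : EuclideanSpace ℝ (Fin n) → EuclideanSpace ℝ (Fin m) → ℝ}
  {X : Set (EuclideanSpace ℝ (Fin n))} {Z : Set (EuclideanSpace ℝ (Fin m))}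
  {f : EuclideanSpace ℝ (Fin n) → ℝ} {x : EuclideanSpace ℝ (Fin n)}

theorem UConvexX.nonempty_approxUSubdifferential
    (hconv : UConvexX u X Z (fun x => (f x : EReal))) (hx : x ∈ X) {ε : ℝ} (hε : 0 < ε) :
    (approxUSubdifferential u X Z f x ε).Nonempty := by
  obtain ⟨A, -, hAZ, hA⟩ := hconv
  beta_reduce at hA
  have hminorant : ∀ q ∈ A, ∀ x' ∈ X, u x' q.1 + q.2 ≤ f x' := fun q hq x' hx' => by
    have : ((u x' q.1 + q.2 : ℝ) : EReal) ≤ f x' := by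
      rw [hA x' hx']
      exact le_iSup₂ (f := fun q (_ : q ∈ A) => ((u x' q.1 + q.2 : ℝ) : EReal)) q hq
    exact_mod_cast this
  have hlt : ((f x - ε : ℝ) : EReal) < ⨆ q ∈ A, ((u x q.1 + q.2 : ℝ) : EReal) := by
    rw [← hA x hx]
    exact_mod_cast sub_lt_self (f x) hε
  obtain ⟨q, hq, hclose⟩ := lt_biSup_iff.mp hlt
  have hclose' : f x - ε < u x q.1 + q.2 := by exact_mod_cast hclose
  exact ⟨q.1, hAZ q hq, fun x' hx' => by linarith [hminorant q hq x' hx']⟩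

theorem add_sharpX_eq_of_mem_approxUSubdifferential_zero {z : EuclideanSpace ℝ (Fin m)}
    (hx : x ∈ X) (hz : z ∈ approxUSubdifferential u X Z f x 0) :
    (f x : EReal) + sharpX u X (fun x' => (f x' : EReal)) z = u x z := by
  have hsharp : sharpX u X (fun x' => (f x' : EReal)) z = ((u x z - f x : ℝ) : EReal) := by
    refine le_antisymm (iSup₂_le fun x' hx' => ?_) ?_
    · rw [← EReal.coe_sub]
      exact EReal.coe_le_coe_iff.mpr (by simpa only [add_zero] using hz.2 x' hx')
    · exact_mod_cast le_iSup₂ (f := fun x' (_ : x' ∈ X) => (u x' z : EReal) - f x') x hx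
  rw [hsharp, ← EReal.coe_add, add_sub_cancel]

end Euclidean

theorem uconvex_subdifferentiable_general {n m : ℕ}
    (X : Set (EuclideanSpace ℝ (Fin n))) (Z : Set (EuclideanSpace ℝ (Fin m)))
    (hZ : IsCompact Z)
    (u : EuclideanSpace ℝ (Fin n) → EuclideanSpace ℝ (Fin m) → ℝ)
    (hu : ContinuousOn (fun q => u q.1 q.2) (X ×ˢ Z))
    (f : EuclideanSpace ℝ (Fin n) → ℝ)
    (hconv : UConvexX u X Z (fun x => (f x : EReal))) :
    ∀ x ∈ X, ∃ z ∈ Z,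
      (f x : EReal) + sharpX u X (fun x' => (f x' : EReal)) z = (u x z : EReal) := by
  intro x hx
  obtain ⟨z, hz⟩ := nonempty_approxUSubdifferential_zero hZ hu hx
    fun _ hε => hconv.nonempty_approxUSubdifferential hx hε
  exact ⟨z, hz.1, add_sharpX_eq_of_mem_approxUSubdifferential_zero hx hz⟩

/-- Every real-valued `u`-convex function on `X` is subdifferentiable everywhere on `X`. -/
theorem uconvex_subdifferentiable {n m : ℕ}
    (X : Set (EuclideanSpace ℝ (Fin n))) (Z : Set (EuclideanSpace ℝ (Fin m)))
    (hX : IsCompact X) (hZ : IsCompact Z) (hXne : X.Nonempty) (hZne : Z.Nonempty)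
    (u : EuclideanSpace ℝ (Fin n) → EuclideanSpace ℝ (Fin m) → ℝ)
    (hu : ContinuousOn (fun q => u q.1 q.2) (X ×ˢ Z))
    (f : EuclideanSpace ℝ (Fin n) → ℝ)
    (hconv : UConvexX u X Z (fun x => (f x : EReal))) :
    ∀ x ∈ X, ∃ z ∈ Z,
      (f x : EReal) + sharpX u X (fun x' => (f x' : EReal)) z = (u x z : EReal) :=
  uconvex_subdifferentiable_general X Z hZ u hu f hconv
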